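/- arXiv:1506.02629 — 4 statements merged into one kernel-verified Lean document; each statement's English description precedes it below -/
import Mathlib

section
/- Let A be a randomized algorithm taking as input an n-element dataset from 𝒳^n and outputting a value in a finite set 𝒴. Then for every β > 0, A has β-approximate max-information at most log(|𝒴|/β); that is, I_∞^β(A,n) ≤ log(|𝒴|/β). -/
open scoped ENNReal

/-- Probability of an event under a PMF. -/
noncomputable def pr {Z : Type*} (p : PMF Z) (O : Set Z) : ℝ≥0∞ :=
  p.toOuterMeasure O

/-- Product of two independent PMFs. -/
noncomputable def pmfPair {A B : Type*} (p : PMF A) (q : PMF B) : PMF (A × B) :=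
  p.bind fun a => q.map fun b => (a, b)

/-- Joint distribution of (input, output). -/
noncomputable def joint {A B : Type*} (μ : PMF A) (f : A → PMF B) : PMF (A × B) :=
  μ.bind fun a => (f a).map fun b => (a, b)

/-- Product of the marginals of input and output. -/
noncomputable def indepProd {A B : Type*} (μ : PMF A) (f : A → PMF B) : PMF (A × B) :=
  pmfPair μ (μ.bind f)

/-- `D_∞^δ(p ‖ q) ≤ k` (δ-approximate max-divergence, log base 2). -/
def approxDivLe {Z : Type*} (p q : PMF Z) (δ k : ℝ) : Prop :=
  ∀ O : Set Z, ENNReal.ofReal δ < pr p O →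
    pr p O - ENNReal.ofReal δ ≤ (2 : ℝ≥0∞) ^ k * pr q O

/-- `I_∞^β(S; f(S)) ≤ k` for `S ∼ μ`. -/
def approxMaxInfoLe {A B : Type*} (μ : PMF A) (f : A → PMF B) (β k : ℝ) : Prop :=
  approxDivLe (joint μ f) (indepProd μ f) β k

/-- `I_∞^β(A, n) ≤ k`: the bound holds for every distribution over datasets. -/
def algApproxMaxInfoLe {X Y : Type*} (n : ℕ) (A : (Fin n → X) → PMF Y) (β k : ℝ) : Prop :=
  ∀ μ : PMF (Fin n → X), approxMaxInfoLe μ A β k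

/-!
Split an event `O` into its fibres over the outputs `y`, and let `q = μ.bind A` be the output
marginal and `t = β / |Y|`. A fibre with `q y < t` has joint probability at most `q y < t`, so these
fibres carry less than `|Y| t = β` in total. On a fibre with `t ≤ q y` we have
`μ x * A x y ≤ μ x ≤ t⁻¹ * (μ x * q y)`, so there the joint mass is at most `t⁻¹ = |Y| / β`
times the product mass.
-/

section Joint

variable {A B : Type*} (μ : PMF A) (f : A → PMF B)

lemma joint_apply (a : A) (b : B) : joint μ f (a, b) = μ a * f a b := by
  simp only [joint, PMF.bind_apply, PMF.map_apply]
  rw [tsum_eq_single a fun a' ha' => by simp [Prod.ext_iff, Ne.symm ha'],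
    tsum_eq_single b fun b' hb' => by simp [Ne.symm hb']]
  simp

lemma indepProd_apply (a : A) (b : B) : indepProd μ f (a, b) = μ a * μ.bind f b :=
  joint_apply μ (fun _ => μ.bind f) a b

lemma tsum_joint_apply (b : B) : ∑' a, joint μ f (a, b) = μ.bind f b := by
  simp only [joint_apply, PMF.bind_apply]

lemma joint_apply_le_inv_mul_indepProd_apply {t : ℝ≥0∞} (ht₀ : t ≠ 0) (ht : t ≠ ∞)
    {b : B} (hb : t ≤ μ.bind f b) (a : A) :
    joint μ f (a, b) ≤ t⁻¹ * indepProd μ f (a, b) := by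
  have h_one : 1 ≤ t⁻¹ * μ.bind f b :=
    (ENNReal.inv_mul_cancel ht₀ ht).symm.le.trans (by gcongr)
  calc joint μ f (a, b) = μ a * f a b := joint_apply μ f a b
    _ ≤ μ a * (t⁻¹ * μ.bind f b) := by gcongr; exact (PMF.coe_le_one _ _).trans h_one
    _ = t⁻¹ * indepProd μ f (a, b) := by rw [indepProd_apply]; ring

lemma pr_eq_sum_tsum_indicator [Fintype B] (p : PMF (A × B)) (O : Set (A × B)) :
    pr p O = ∑ b, ∑' a, O.indicator p (a, b) := by
  rw [pr, PMF.toOuterMeasure_apply, ← tsum_fintype (L := SummationFilter.unconditional _),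
    ← ENNReal.tsum_comm, ENNReal.tsum_prod']

lemma tsum_indicator_joint_le {t : ℝ≥0∞} (ht₀ : t ≠ 0) (ht : t ≠ ∞) (O : Set (A × B)) (b : B) :
    ∑' a, O.indicator (joint μ f) (a, b) ≤ t + t⁻¹ * ∑' a, O.indicator (indepProd μ f) (a, b) := by
  rcases lt_or_ge (μ.bind f b) t with hb | hb
  · calc ∑' a, O.indicator (joint μ f) (a, b) ≤ ∑' a, joint μ f (a, b) :=
          ENNReal.tsum_le_tsum fun a => O.indicator_le_self _ _
      _ = μ.bind f b := tsum_joint_apply μ f b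
      _ ≤ t + _ := hb.le.trans le_self_add
  · rw [← ENNReal.tsum_mul_left]
    refine le_add_left (ENNReal.tsum_le_tsum fun a => ?_)
    by_cases hab : (a, b) ∈ O
    · simp only [O.indicator_of_mem hab]
      exact joint_apply_le_inv_mul_indepProd_apply μ f ht₀ ht hb a
    · simp [O.indicator_of_notMem hab]

lemma pr_joint_le [Fintype B] {t : ℝ≥0∞} (ht₀ : t ≠ 0) (ht : t ≠ ∞) (O : Set (A × B)) :
    pr (joint μ f) O ≤ Fintype.card B * t + t⁻¹ * pr (indepProd μ f) O := by
  rw [pr_eq_sum_tsum_indicator, pr_eq_sum_tsum_indicator, Finset.mul_sum, ← nsmul_eq_mul,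
    ← Finset.card_univ, ← Finset.sum_const, ← Finset.sum_add_distrib]
  exact Finset.sum_le_sum fun b _ => tsum_indicator_joint_le μ f ht₀ ht O b

end Joint

lemma ENNReal.two_rpow_logb {x : ℝ} (hx : 0 < x) :
    (2 : ℝ≥0∞) ^ Real.logb 2 x = ENNReal.ofReal x := by
  rw [← ENNReal.ofReal_ofNat, ENNReal.ofReal_rpow_of_pos two_pos,
    Real.rpow_logb two_pos (by norm_num) hx]

theorem approxMaxInfo_le_log_card_general
    {X Y : Type*} [Fintype Y] {n : ℕ}
    (A : (Fin n → X) → PMF Y) (β : ℝ) (hβ : 0 < β) :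
    algApproxMaxInfoLe n A β (Real.logb 2 ((Fintype.card Y : ℝ) / β)) := by
  intro μ O _
  have : Nonempty Y := ⟨((A μ.support_nonempty.some).support_nonempty.some)⟩
  have hc : (0 : ℝ) < Fintype.card Y := Nat.cast_pos.2 Fintype.card_pos
  set t := ENNReal.ofReal (β / Fintype.card Y)
  have ht₀ : t ≠ 0 := ENNReal.ofReal_ne_zero_iff.2 (div_pos hβ hc)
  have h_card : (Fintype.card Y : ℝ≥0∞) * t = ENNReal.ofReal β := by
    rw [← ENNReal.ofReal_natCast, ← ENNReal.ofReal_mul hc.le, mul_div_cancel₀ _ hc.ne']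
  have h_inv : t⁻¹ = (2 : ℝ≥0∞) ^ Real.logb 2 (Fintype.card Y / β) := by
    rw [ENNReal.two_rpow_logb (div_pos hc hβ), ← inv_div,
      ENNReal.ofReal_inv_of_pos (div_pos hβ hc)]
  rw [tsub_le_iff_left, ← h_card, ← h_inv]
  exact pr_joint_le μ A ht₀ ENNReal.ofReal_ne_top O

/-- any randomized algorithm with a finite range `𝒴` has, for every
`β > 0`, β-approximate max-information at most `log₂(|𝒴| / β)`. -/
theorem approxMaxInfo_le_log_card
    {X Y : Type*} [Fintype X] [Fintype Y] {n : ℕ}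
    (A : (Fin n → X) → PMF Y) (β : ℝ) (hβ : 0 < β) :
    algApproxMaxInfoLe n A β (Real.logb 2 ((Fintype.card Y : ℝ) / β)) :=
  approxMaxInfo_le_log_card_general A β hβ
end

section
/- Let A be a randomized algorithm that takes a dataset in 𝒳^n and outputs a function f : 𝒳^n → ℝ of sensitivity c, with the output ranging over a finite set of such functions. Let S be a random dataset chosen according to the product distribution 𝒫^n over 𝒳^n and let f = A(S). If A is τ/(cn)-differentially private, then Pr[ f(S) − E_{S'∼𝒫^n}[f(S')] ≥ τ ] ≤ 3·exp( −τ² / (c² n) ). -/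
open scoped ENNReal

/-- Two datasets are adjacent if they differ in a single element. -/
def Adjacent {X : Type*} {n : ℕ} (S S' : Fin n → X) : Prop :=
  ∃ i : Fin n, ∀ j : Fin n, j ≠ i → S j = S' j

/-- ε-differential privacy: for all adjacent datasets `S, S'` and every output `y`,
`Pr[A(S) = y] ≤ e^ε · Pr[A(S') = y]`. -/
def DiffPrivate {X Y : Type*} {n : ℕ} (A : (Fin n → X) → PMF Y) (ε : ℝ) : Prop :=
  ∀ S S' : Fin n → X, Adjacent S S' → ∀ y : Y,
    A S y ≤ ENNReal.ofReal (Real.exp ε) * A S' y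

/-- The distribution of `n` i.i.d. samples from `P`. -/
noncomputable def iid {X : Type*} (P : PMF X) : (n : ℕ) → PMF (Fin n → X)
  | 0 => PMF.pure fun i => i.elim0
  | n + 1 => (iid P n).bind fun S => P.map fun x => Fin.cons x S

/-- A function `f : 𝒳^n → ℝ` has sensitivity `c`: changing a single coordinate
changes the value by at most `c`. -/
def Sensitivity {X : Type*} {n : ℕ} (f : (Fin n → X) → ℝ) (c : ℝ) : Prop :=
  ∀ (S : Fin n → X) (i : Fin n) (x' : X), f S - f (Function.update S i x') ≤ c

/-- The expectation of `g` under a PMF `μ` on a finite type. -/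
noncomputable def pmfExp {Z : Type*} [Fintype Z] (μ : PMF Z) (g : Z → ℝ) : ℝ :=
  ∑ z : Z, (μ z).toReal * g z

/-! Fix an output `f` and write `q(S) = Pr[A(S) = f]`. Differential privacy says that `log q` has
sensitivity `ε`, so `t f + log q` has bounded differences `t c + ε` and McDiarmid's moment
bound (Hoeffding's lemma, one coordinate at a time) controls `E[q(S) exp(t f(S))]`. A Chernoff
bound for the `q`-weighted measure, together with Jensen's inequality `exp E[log q] ≤ E[q]`, gives
`E[q(S) 1{f(S) - E f ≥ τ}] ≤ exp(-tτ + n(tc + ε)²/8) E[q]`. Summing over `f` and choosing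
`t = 3τ/(c²n)` bounds the probability by `exp(-τ²/(c²n))`. -/

open Real

section pmfExp

variable {Z : Type*} [Fintype Z]

lemma pmfExp_eq_integral [MeasurableSpace Z] [MeasurableSingletonClass Z] (μ : PMF Z)
    (g : Z → ℝ) : pmfExp μ g = ∫ z, g z ∂μ.toMeasure := by
  simp [pmfExp, PMF.integral_eq_sum]

lemma pmfExp_const (μ : PMF Z) (a : ℝ) : pmfExp μ (fun _ => a) = a := by
  have h := congrArg ENNReal.toReal μ.tsum_coe
  rw [tsum_fintype, ENNReal.toReal_sum fun z _ => μ.apply_ne_top z] at h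
  simp [pmfExp, ← Finset.sum_mul, h]

lemma pmfExp_add (μ : PMF Z) (g h : Z → ℝ) :
    pmfExp μ (fun z => g z + h z) = pmfExp μ g + pmfExp μ h := by
  simp only [pmfExp, mul_add, Finset.sum_add_distrib]

lemma pmfExp_sub (μ : PMF Z) (g h : Z → ℝ) :
    pmfExp μ (fun z => g z - h z) = pmfExp μ g - pmfExp μ h := by
  simp only [pmfExp, mul_sub, Finset.sum_sub_distrib]

lemma pmfExp_const_mul (μ : PMF Z) (a : ℝ) (g : Z → ℝ) :
    pmfExp μ (fun z => a * g z) = a * pmfExp μ g := by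
  simp only [pmfExp, Finset.mul_sum]
  exact Finset.sum_congr rfl fun _ _ => by ring

lemma pmfExp_mono (μ : PMF Z) {g h : Z → ℝ} (hgh : ∀ z, g z ≤ h z) :
    pmfExp μ g ≤ pmfExp μ h :=
  Finset.sum_le_sum fun z _ => mul_le_mul_of_nonneg_left (hgh z) ENNReal.toReal_nonneg

lemma pmfExp_pure (a : Z) (g : Z → ℝ) : pmfExp (PMF.pure a) g = g a := by
  classical
  simp [pmfExp, PMF.pure_apply, apply_ite ENNReal.toReal]

lemma pmfExp_bind {Y : Type*} [Fintype Y] (μ : PMF Y) (k : Y → PMF Z) (g : Z → ℝ) :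
    pmfExp (μ.bind k) g = pmfExp μ (fun y => pmfExp (k y) g) := by
  simp only [pmfExp, PMF.bind_apply, tsum_fintype, Finset.mul_sum]
  rw [Finset.sum_comm]
  refine Finset.sum_congr rfl fun z _ => ?_
  rw [ENNReal.toReal_sum fun y _ => ENNReal.mul_ne_top (μ.apply_ne_top y) ((k y).apply_ne_top z),
    Finset.sum_mul]
  simp only [ENNReal.toReal_mul, mul_assoc]

lemma pmfExp_map {Y : Type*} [Fintype Y] (μ : PMF Y) (φ : Y → Z) (g : Z → ℝ) :
    pmfExp (μ.map φ) g = pmfExp μ (fun y => g (φ y)) := by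
  simp only [← PMF.bind_pure_comp, pmfExp_bind, Function.comp_apply, pmfExp_pure]

lemma exp_pmfExp_le (μ : PMF Z) (g : Z → ℝ) :
    exp (pmfExp μ g) ≤ pmfExp μ (fun z => exp (g z)) := by
  have hw : ∑ z, (μ z).toReal = 1 := by simpa [pmfExp] using pmfExp_const μ 1
  simpa [pmfExp, smul_eq_mul] using convexOn_exp.map_sum_le (t := Finset.univ)
    (fun z _ => ENNReal.toReal_nonneg) hw (fun z _ => Set.mem_univ (g z))

lemma pmfExp_exp_le (μ : PMF Z) (g : Z → ℝ) {b : ℝ} (hg : ∀ z z', g z - g z' ≤ b) :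
    pmfExp μ (fun z => exp (g z)) ≤ exp (pmfExp μ g + b ^ 2 / 8) := by
  let _ : MeasurableSpace Z := ⊤
  obtain ⟨z₀, -⟩ := μ.support_nonempty
  obtain ⟨zmin, -, hzmin⟩ := Finset.exists_min_image Finset.univ g ⟨z₀, Finset.mem_univ z₀⟩
  have hIcc : ∀ z, g z ∈ Set.Icc (g zmin) (g zmin + b) := fun z =>
    ⟨hzmin z (Finset.mem_univ z), by linarith [hg z zmin]⟩
  have hmgf := (ProbabilityTheory.hasSubgaussianMGF_of_mem_Icc (μ := μ.toMeasure)
    (measurable_of_finite g).aemeasurable (MeasureTheory.ae_of_all _ hIcc)).mgf_le 1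
  simp only [ProbabilityTheory.mgf, one_mul, ← pmfExp_eq_integral] at hmgf
  have hvar : ((‖g zmin + b - g zmin‖₊ / 2) ^ 2 : NNReal) * (1 : ℝ) ^ 2 / 2 = b ^ 2 / 8 := by
    norm_num [div_pow]
    ring
  rw [hvar] at hmgf
  calc pmfExp μ (fun z => exp (g z))
      = exp (pmfExp μ g) * pmfExp μ (fun z => exp (g z - pmfExp μ g)) := by
        rw [← pmfExp_const_mul]
        simp only [← exp_add, add_sub_cancel]
    _ ≤ exp (pmfExp μ g) * exp (b ^ 2 / 8) := by gcongr
    _ = exp (pmfExp μ g + b ^ 2 / 8) := (exp_add _ _).symm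

end pmfExp

section Sensitivity

variable {X : Type*} {n : ℕ} {f g : (Fin n → X) → ℝ} {c d : ℝ}

lemma Sensitivity.nonneg [Nonempty X] (hf : Sensitivity f c) (hn : n ≠ 0) : 0 ≤ c := by
  obtain ⟨x⟩ := ‹Nonempty X›
  let S : Fin n → X := fun _ => x
  simpa [S] using hf S ⟨0, Nat.pos_of_ne_zero hn⟩ (S ⟨0, Nat.pos_of_ne_zero hn⟩)

lemma Sensitivity.add (hf : Sensitivity f c) (hg : Sensitivity g d) :
    Sensitivity (fun S => f S + g S) (c + d) := fun S i x => by
  linarith [hf S i x, hg S i x]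

lemma Sensitivity.const_mul {a : ℝ} (ha : 0 ≤ a) (hf : Sensitivity f c) :
    Sensitivity (fun S => a * f S) (a * c) := fun S i x => by
  rw [← mul_sub]
  exact mul_le_mul_of_nonneg_left (hf S i x) ha

end Sensitivity

lemma pmfExp_iid_succ {X : Type*} [Fintype X] (P : PMF X) (n : ℕ) (g : (Fin (n + 1) → X) → ℝ) :
    pmfExp (iid P (n + 1)) g = pmfExp (iid P n) (fun S => pmfExp P (fun x => g (Fin.cons x S))) := by
  simp only [iid, pmfExp_bind, pmfExp_map]

theorem pmfExp_iid_exp_le {X : Type*} [Fintype X] (P : PMF X) {n : ℕ}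
    (g : (Fin n → X) → ℝ) {b : ℝ} (hg : Sensitivity g b) :
    pmfExp (iid P n) (fun S => exp (g S)) ≤ exp (pmfExp (iid P n) g + n * b ^ 2 / 8) := by
  induction n with
  | zero => simp [iid, pmfExp_pure]
  | succ n ih =>
    set gAvg : (Fin n → X) → ℝ := fun S => pmfExp P (fun x => g (Fin.cons x S))
    have hAvg : Sensitivity gAvg b := fun S i y => by
      simp only [gAvg, ← pmfExp_sub, Fin.cons_update]
      exact (pmfExp_mono P fun x => hg (Fin.cons x S) i.succ y).trans_eq (pmfExp_const P b)
    calc pmfExp (iid P (n + 1)) (fun S => exp (g S))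
        ≤ pmfExp (iid P n) (fun S => exp (b ^ 2 / 8) * exp (gAvg S)) := by
          rw [pmfExp_iid_succ]
          refine pmfExp_mono _ fun S => ?_
          rw [← exp_add, add_comm (b ^ 2 / 8)]
          refine pmfExp_exp_le P _ fun x y => ?_
          simpa only [Fin.update_cons_zero] using hg (Fin.cons x S) 0 y
      _ ≤ exp (b ^ 2 / 8) * exp (pmfExp (iid P n) gAvg + n * b ^ 2 / 8) := by
          rw [pmfExp_const_mul]
          gcongr
          exact ih gAvg hAvg
      _ = exp (pmfExp (iid P (n + 1)) g + (n + 1 : ℕ) * b ^ 2 / 8) := by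
          rw [← exp_add, pmfExp_iid_succ]
          congr 1
          push_cast
          ring

lemma Function.forall_of_update_closed {ι α : Type*} [Fintype ι] [DecidableEq ι]
    {Q : (ι → α) → Prop} (hQ : ∀ S i x, Q S → Q (Function.update S i x)) {S S' : ι → α}
    (hS : Q S) : Q S' := by
  have key : ∀ s : Finset ι, Q (s.piecewise S' S) := fun s => by
    induction s using Finset.induction_on with
    | empty => simpa using hS
    | insert i s _ ih => rw [Finset.piecewise_insert]; exact hQ _ _ _ ih
  simpa using key Finset.univ

lemma Adjacent.symm {X : Type*} {n : ℕ} {S S' : Fin n → X} (h : Adjacent S S') : Adjacent S' S :=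
  let ⟨i, hi⟩ := h
  ⟨i, fun j hj => (hi j hj).symm⟩

lemma adjacent_update {X : Type*} {n : ℕ} (S : Fin n → X) (i : Fin n) (x : X) :
    Adjacent (Function.update S i x) S :=
  ⟨i, fun _ hj => Function.update_of_ne hj x S⟩

namespace DiffPrivate

variable {X Y : Type*} {n : ℕ} {A : (Fin n → X) → PMF Y} {ε : ℝ}

lemma nonneg [Nonempty X] (hA : DiffPrivate A ε) (hn : n ≠ 0) : 0 ≤ ε := by
  obtain ⟨x⟩ := ‹Nonempty X›
  let S : Fin n → X := fun _ => x
  have hone : (1 : ℝ≥0∞) ≤ ENNReal.ofReal (exp ε) := by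
    calc (1 : ℝ≥0∞) = ∑' y, A S y := (A S).tsum_coe.symm
      _ ≤ ∑' y, ENNReal.ofReal (exp ε) * A S y :=
          ENNReal.tsum_le_tsum fun y => hA S S ⟨⟨0, Nat.pos_of_ne_zero hn⟩, fun _ _ => rfl⟩ y
      _ = ENNReal.ofReal (exp ε) := by rw [ENNReal.tsum_mul_left, (A S).tsum_coe, mul_one]
  rw [← ENNReal.ofReal_one, ENNReal.ofReal_le_ofReal_iff (exp_pos ε).le, one_le_exp_iff] at hone
  exact hone

lemma forall_eq_zero_or_forall_ne_zero (hA : DiffPrivate A ε) (y : Y) :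
    (∀ S, A S y = 0) ∨ ∀ S, A S y ≠ 0 := by
  classical
  by_contra! h
  obtain ⟨⟨S, hS⟩, ⟨S', hS'⟩⟩ := h
  refine hS (Function.forall_of_update_closed (Q := fun S => A S y = 0) (fun T i x hT => ?_) hS')
  simpa [hT] using hA _ _ (adjacent_update T i x) y

lemma sensitivity_log (hA : DiffPrivate A ε) {y : Y} (hy : ∀ S, A S y ≠ 0) :
    Sensitivity (fun S => log (A S y).toReal) ε := fun S i x => by
  have hpos : ∀ T, 0 < (A T y).toReal := fun T => ENNReal.toReal_pos (hy T) ((A T).apply_ne_top y)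
  have hle : (A S y).toReal ≤ exp ε * (A (Function.update S i x) y).toReal := by
    have := ENNReal.toReal_mono (ENNReal.mul_ne_top ENNReal.ofReal_ne_top ((A _).apply_ne_top y))
      (hA S _ (adjacent_update S i x).symm y)
    rwa [ENNReal.toReal_mul, ENNReal.toReal_ofReal (exp_pos ε).le] at this
  have := log_le_log (hpos S) hle
  rw [log_mul (exp_ne_zero ε) (hpos _).ne', log_exp] at this
  linarith

end DiffPrivate

lemma pmfExp_mul_indicator_le {Z : Type*} [Fintype Z] (μ : PMF Z) (h q : Z → ℝ)
    (hq : ∀ z, 0 < q z) {t τ K : ℝ} (ht : 0 ≤ t)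
    (hmgf : pmfExp μ (fun z => exp (t * h z + log (q z)))
      ≤ exp (pmfExp μ (fun z => t * h z + log (q z)) + K)) :
    pmfExp μ (fun z => q z * {z | τ ≤ h z - pmfExp μ h}.indicator 1 z)
      ≤ exp (-(t * τ) + K) * pmfExp μ q := by
  set m := pmfExp μ h
  have hpt : ∀ z, q z * {z | τ ≤ h z - m}.indicator 1 z
      ≤ exp (-(t * (m + τ))) * exp (t * h z + log (q z)) := fun z => by
    rw [exp_add, exp_log (hq z), ← mul_assoc, ← exp_add, mul_comm]
    refine mul_le_mul_of_nonneg_right ?_ (hq z).le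
    rw [Set.indicator_apply]
    split_ifs with hz
    · exact one_le_exp (by nlinarith [Set.mem_ofPred.mp hz])
    · exact (exp_pos _).le
  calc pmfExp μ (fun z => q z * {z | τ ≤ h z - m}.indicator 1 z)
      ≤ exp (-(t * (m + τ))) * pmfExp μ (fun z => exp (t * h z + log (q z))) := by
        rw [← pmfExp_const_mul]
        exact pmfExp_mono μ hpt
    _ ≤ exp (-(t * (m + τ))) * exp (pmfExp μ (fun z => t * h z + log (q z)) + K) := by gcongr
    _ = exp (-(t * τ) + K) * exp (pmfExp μ (fun z => log (q z))) := by
        rw [pmfExp_add, pmfExp_const_mul, ← exp_add, ← exp_add]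
        congr 1
        ring
    _ ≤ exp (-(t * τ) + K) * pmfExp μ q := by
        gcongr
        simpa only [exp_log (hq _)] using exp_pmfExp_le μ (fun z => log (q z))

lemma pmfExp_joint {Y Z : Type*} [Fintype Y] [Fintype Z] (μ : PMF Y) (k : Y → PMF Z)
    (g : Y × Z → ℝ) : pmfExp (joint μ k) g = ∑ z, pmfExp μ (fun y => (k y z).toReal * g (y, z)) := by
  simp only [joint, pmfExp_bind, pmfExp_map]
  simp only [pmfExp, Finset.mul_sum]
  rw [Finset.sum_comm]

lemma pr_eq_ofReal_pmfExp {Z : Type*} [Fintype Z] (p : PMF Z) (O : Set Z) :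
    pr p O = ENNReal.ofReal (pmfExp p (O.indicator 1)) := by
  have hfin : ∀ z, O.indicator p z ≠ ⊤ := fun z =>
    ne_top_of_le_ne_top (p.apply_ne_top z) (Set.indicator_le_self O p z)
  rw [pr, PMF.toOuterMeasure_apply_fintype, pmfExp, ← ENNReal.ofReal_toReal
    (ENNReal.sum_ne_top.mpr fun z _ => hfin z), ENNReal.toReal_sum fun z _ => hfin z]
  congr 1
  refine Finset.sum_congr rfl fun z _ => ?_
  by_cases hz : z ∈ O <;> simp [hz]

theorem pmfExp_joint_iid_deviation_le {X F : Type*} [Fintype X] [Fintype F] {n : ℕ} (ev : F → (Fin n → X) → ℝ) {c : ℝ}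
    (hsens : ∀ f : F, Sensitivity (ev f) c) (P : PMF X) (A : (Fin n → X) → PMF F) {ε : ℝ}
    (hA : DiffPrivate A ε) {t : ℝ} (ht : 0 ≤ t) (τ : ℝ) :
    pmfExp (joint (iid P n) A)
        ({p : (Fin n → X) × F | τ ≤ ev p.2 p.1 - pmfExp (iid P n) (ev p.2)}.indicator 1)
      ≤ exp (-(t * τ) + n * (t * c + ε) ^ 2 / 8) := by
  have htotal : ∑ f, pmfExp (iid P n) (fun S => (A S f).toReal) = 1 := by
    simpa [pmfExp_const] using (pmfExp_joint (iid P n) A fun _ => 1).symm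
  rw [pmfExp_joint]
  refine (Finset.sum_le_sum fun f _ => ?_).trans_eq (by rw [← Finset.mul_sum, htotal, mul_one])
  rcases hA.forall_eq_zero_or_forall_ne_zero f with hzero | hpos
  · simp [hzero, pmfExp_const]
  · have hq : ∀ S, 0 < (A S f).toReal := fun S =>
      ENNReal.toReal_pos (hpos S) ((A S).apply_ne_top f)
    exact pmfExp_mul_indicator_le _ (ev f) _ hq ht
      (pmfExp_iid_exp_le P _ (((hsens f).const_mul ht).add (hA.sensitivity_log hpos)))

/-- let `A` be a randomized algorithm outputting (a name `f : F` of) a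
`c`-sensitive function `ev f : 𝒳^n → ℝ` from a finite set `F` of such functions.
Let `S ∼ 𝒫^n` and `f = A(S)`.  If `A` is `τ/(cn)`-differentially private then
`Pr[ f(S) − E_{S'∼𝒫^n}[f(S')] ≥ τ ] ≤ 3 exp(−τ²/(c²n))`. -/
theorem pure_dp_low_sensitivity_generalization
    {X F : Type*} [Fintype X] [Fintype F] {n : ℕ}
    (ev : F → (Fin n → X) → ℝ) (c : ℝ)
    (hsens : ∀ f : F, Sensitivity (ev f) c)
    (P : PMF X) (A : (Fin n → X) → PMF F) (τ : ℝ)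
    (hA : DiffPrivate A (τ / (c * n))) :
    pr (joint (iid P n) A)
        {p : (Fin n → X) × F | τ ≤ ev p.2 p.1 - pmfExp (iid P n) (ev p.2)}
      ≤ ENNReal.ofReal (3 * Real.exp (-(τ ^ 2) / (c ^ 2 * n))) := by
  obtain ⟨x, -⟩ := P.support_nonempty
  -- the minimiser of `-tτ + n(tc + ε)²/8` at `ε = τ/(cn)`
  have ht : 0 ≤ 3 * τ / (c ^ 2 * n) := by
    rcases eq_or_ne n 0 with rfl | hn
    · simp
    obtain ⟨f, -⟩ := (A fun _ => x).support_nonempty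
    have : Nonempty X := ⟨x⟩
    rw [show 3 * τ / (c ^ 2 * n) = 3 * (τ / (c * n)) / c by ring]
    exact div_nonneg (mul_nonneg zero_le_three (hA.nonneg hn)) ((hsens f).nonneg hn)
  have hexponent : -(3 * τ / (c ^ 2 * n) * τ) + n * (3 * τ / (c ^ 2 * n) * c + τ / (c * n)) ^ 2 / 8
      = -(τ ^ 2) / (c ^ 2 * n) := by
    -- with `x / 0 = 0` both sides vanish when `c = 0` or `n = 0`
    rcases eq_or_ne c 0 with rfl | hc
    · simp
    rcases eq_or_ne n 0 with rfl | hn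
    · simp
    field_simp
    ring
  rw [pr_eq_ofReal_pmfExp]
  refine ENNReal.ofReal_le_ofReal ((pmfExp_joint_iid_deviation_le ev hsens P A hA ht τ).trans ?_)
  rw [hexponent]
  linarith [exp_pos (-(τ ^ 2) / (c ^ 2 * n))]
end

section
/- Let A : 𝒳^n → 𝒴 be a randomized algorithm whose output has randomized description length k, and let S be a random dataset over 𝒳^n. Assume that R : 𝒴 → 2^{𝒳^n} is such that for every y ∈ 𝒴, Pr[S ∈ R(y)] ≤ β. Then Pr[S ∈ R(A(S))] ≤ 2^k · β. -/
open scoped ENNReal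

/-- A randomized algorithm, given explicitly by its coins `r : R`, has randomized
description length `k` if for every fixed setting of its coins the set of possible
outputs (over all inputs) has size at most `2^k`. -/
def RandDescLen {R I Y : Type*} (A : R → I → Y) (k : ℕ) : Prop :=
  ∀ r : R, Nat.card (Set.range (A r)) ≤ 2 ^ k

lemma pr_mono {Z : Type*} (p : PMF Z) {O O' : Set Z} (h : O ⊆ O') : pr p O ≤ pr p O' :=
  p.toOuterMeasure.mono h

/-- let `A` be a randomized algorithm (with coins `r ∼ ρ`, independent
of the random dataset `S ∼ μ`) whose output has randomized description length `k`.
If `Pr[S ∈ R(y)] ≤ β` for every fixed `y ∈ 𝒴`, then `Pr[S ∈ R(A(S))] ≤ 2^k · β`. -/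
theorem randomized_description_length_generalization
    {R X Y : Type*} [Fintype Y] {n : ℕ}
    (ρ : PMF R) (A : R → (Fin n → X) → Y) (k : ℕ) (hA : RandDescLen A k)
    (μ : PMF (Fin n → X)) (RR : Y → Set (Fin n → X)) (β : ℝ)
    (h : ∀ y : Y, pr μ (RR y) ≤ ENNReal.ofReal β) :
    pr (pmfPair ρ μ) {p : R × (Fin n → X) | p.2 ∈ RR (A p.1 p.2)}
      ≤ 2 ^ k * ENNReal.ofReal β := by
  classical
  have key : ∀ r : R, pr μ {s | s ∈ RR (A r s)} ≤ 2 ^ k * ENNReal.ofReal β := by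
    intro r
    have hsub : {s | s ∈ RR (A r s)} ⊆ ⋃ y ∈ (Set.range (A r)).toFinset, RR y := by
      intro s hs
      exact Set.mem_biUnion (Set.mem_toFinset.mpr ⟨s, rfl⟩) hs
    calc pr μ {s | s ∈ RR (A r s)}
        ≤ pr μ (⋃ y ∈ (Set.range (A r)).toFinset, RR y) := pr_mono μ hsub
      _ ≤ ∑ y ∈ (Set.range (A r)).toFinset, pr μ (RR y) := by
          exact MeasureTheory.measure_biUnion_finset_le _ _
      _ ≤ ∑ y ∈ (Set.range (A r)).toFinset, ENNReal.ofReal β :=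
          Finset.sum_le_sum fun y _ => h y
      _ = (Set.range (A r)).toFinset.card * ENNReal.ofReal β := by
          simp [Finset.sum_const, nsmul_eq_mul]
      _ ≤ 2 ^ k * ENNReal.ofReal β := by
          apply mul_le_mul_left
          have := hA r
          rw [Nat.card_coe_set_eq, Set.ncard_eq_toFinset_card'] at this
          calc ((Set.range (A r)).toFinset.card : ℝ≥0∞) ≤ ((2:ℕ) ^ k : ℕ) := by
                exact_mod_cast this
            _ = 2 ^ k := by push_cast; ring
  have expand : pr (pmfPair ρ μ) {p : R × (Fin n → X) | p.2 ∈ RR (A p.1 p.2)}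
      = ∑' r : R, ρ r * pr μ {s | s ∈ RR (A r s)} := by
    rw [pr, pmfPair, PMF.toOuterMeasure_bind_apply]
    refine tsum_congr fun r => ?_
    rw [PMF.toOuterMeasure_map_apply, pr]
    congr 1
  rw [expand]
  calc (∑' r : R, ρ r * pr μ {s | s ∈ RR (A r s)})
      ≤ ∑' r : R, ρ r * (2 ^ k * ENNReal.ofReal β) :=
        ENNReal.tsum_le_tsum fun r => mul_le_mul_right (key r) _
    _ = (∑' r : R, ρ r) * (2 ^ k * ENNReal.ofReal β) := ENNReal.tsum_mul_right
    _ = 2 ^ k * ENNReal.ofReal β := by rw [ρ.tsum_coe, one_mul]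
end

section
/- Let A be a randomized algorithm taking as input an n-element dataset in 𝒳^n and outputting a value in a finite set 𝒴, whose output has randomized description length k. Then for every β > 0, A has β-approximate max-information at most k + log(1/β); that is, I_∞^β(A,n) ≤ k + log(1/β). -/
open scoped ENNReal

lemma bindMap_apply {A B : Type*} (μ : PMF A) (f : A → PMF B) (a : A) (b : B) :
    (μ.bind fun a => (f a).map fun b => (a, b)) (a, b) = μ a * f a b := by
  classical
  rw [PMF.bind_apply]
  rw [tsum_eq_single a]
  · rw [PMF.map_apply, tsum_eq_single b]
    · simp
    · intro b' hb'; simp [Prod.ext_iff, hb'.symm]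
  · intro a' ha'
    rw [PMF.map_apply, tsum_eq_single b]
    · simp [Prod.ext_iff, ha'.symm]
    · intro b' hb'; simp [Prod.ext_iff, hb'.symm]

lemma pr_eq {A B : Type*} [Fintype B] (p : PMF (A × B)) (O : Set (A × B)) :
    pr p O = ∑ b, ∑' a, O.indicator p (a, b) := by
  rw [pr, PMF.toOuterMeasure_apply, ENNReal.tsum_prod', ENNReal.tsum_comm, tsum_fintype]

/-- a randomized algorithm with randomized description length `k`
has, for every `β > 0`, β-approximate max-information at most `k + log₂(1/β)`. -/
theorem randDescLen_approxMaxInfo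
    {R X Y : Type*} [Fintype Y] {n : ℕ}
    (ρ : PMF R) (A : R → (Fin n → X) → Y) (k : ℕ) (hA : RandDescLen A k)
    (β : ℝ) (hβ : 0 < β) :
    algApproxMaxInfoLe n (fun S => ρ.map fun r => A r S) β
      ((k : ℝ) + Real.logb 2 (1 / β)) := by
  classical
  intro μ O _
  set f : (Fin n → X) → PMF Y := fun S => ρ.map fun r => A r S with hf
  set b : ℝ≥0∞ := ENNReal.ofReal β with hb
  have hb0 : b ≠ 0 := by simp [hb, hβ, ENNReal.ofReal_eq_zero, not_le]
  have hbtop : b ≠ ⊤ := ENNReal.ofReal_ne_top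
  have h2 : ((2 : ℝ≥0∞) ^ k) ≠ 0 := by positivity
  have h2top : ((2 : ℝ≥0∞) ^ k) ≠ ⊤ := by
    exact ENNReal.pow_ne_top (by norm_num)
  set g : (Fin n → X) → Y → ℝ≥0∞ := fun S y => if (S, y) ∈ O then 1 else 0 with hg
  set m : Y → ℝ≥0∞ := fun y => (μ.bind f) y with hm
  set π : Y → ℝ≥0∞ := fun y => ∑' S, g S y * μ S with hπ
  set α : Y → ℝ≥0∞ := fun y => ∑' r, (if y ∈ Set.range (A r) then 1 else 0 : ℝ≥0∞) * ρ r
    with hα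
  set P : Y → ℝ≥0∞ := fun y => ∑' S, g S y * (μ S * f S y) with hP
  -- joint probability
  have hp : pr (joint μ f) O = ∑ y, P y := by
    rw [pr_eq]
    refine Finset.sum_congr rfl fun y _ => tsum_congr fun S => ?_
    rw [Set.indicator_apply]
    show _ = g S y * (μ S * f S y)
    rw [show joint μ f (S, y) = μ S * f S y from bindMap_apply μ f S y]
    by_cases h : (S, y) ∈ O <;> simp [hg, h]
  have hq : pr (indepProd μ f) O = ∑ y, π y * m y := by
    rw [pr_eq]
    refine Finset.sum_congr rfl fun y _ => ?_
    have : ∀ S, O.indicator (indepProd μ f) (S, y) = g S y * μ S * m y := by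
      intro S
      rw [Set.indicator_apply]
      rw [show indepProd μ f (S, y) = μ S * (μ.bind f) y from
        bindMap_apply μ (fun _ => μ.bind f) S y]
      by_cases h : (S, y) ∈ O <;> simp [hg, h, hm, mul_assoc]
    rw [tsum_congr this, ENNReal.tsum_mul_right]
  -- P y ≤ m y
  have hPm : ∀ y, P y ≤ m y := by
    intro y
    show (∑' S, g S y * (μ S * f S y)) ≤ (μ.bind f) y
    rw [PMF.bind_apply]
    refine ENNReal.tsum_le_tsum fun S => ?_
    by_cases h : (S, y) ∈ O <;> simp [hg, h]
  -- P y ≤ α y * π y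
  have hPα : ∀ y, P y ≤ α y * π y := by
    intro y
    have hfS : ∀ S, f S y = ∑' r, if y = A r S then ρ r else 0 := fun S =>
      PMF.map_apply _ _ _
    calc P y = ∑' S, ∑' r, g S y * μ S * (if y = A r S then ρ r else 0) := by
          refine tsum_congr fun S => ?_
          rw [hfS, ← mul_assoc, ENNReal.tsum_mul_left]
      _ = ∑' r, ∑' S, g S y * μ S * (if y = A r S then ρ r else 0) := ENNReal.tsum_comm
      _ ≤ ∑' r, (if y ∈ Set.range (A r) then 1 else 0 : ℝ≥0∞) * ρ r * π y := by
          refine ENNReal.tsum_le_tsum fun r => ?_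
          by_cases hr : y ∈ Set.range (A r)
          · simp only [hr, if_true, one_mul]
            calc ∑' S, g S y * μ S * (if y = A r S then ρ r else 0)
                ≤ ∑' S, g S y * μ S * ρ r :=
                  ENNReal.tsum_le_tsum fun S => by
                    refine mul_le_mul_right ?_ _
                    split <;> simp
              _ = ρ r * π y := by rw [ENNReal.tsum_mul_right, hπ, mul_comm]
          · simp only [hr, if_false, zero_mul]
            have : ∀ S, (if y = A r S then ρ r else 0) = 0 := fun S => by
              rw [if_neg]; exact fun h => hr ⟨S, h.symm⟩
            simp [this]
      _ = α y * π y := by rw [hα, ENNReal.tsum_mul_right]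
  -- sum of α bounded by 2^k
  have hαsum : ∑ y, α y ≤ (2 : ℝ≥0∞) ^ k := by
    have swap : ∑ y, α y =
        ∑' r, ∑ y, (if y ∈ Set.range (A r) then 1 else 0 : ℝ≥0∞) * ρ r :=
      (Summable.tsum_finsetSum fun _ _ => ENNReal.summable).symm
    rw [swap]
    have hcard : ∀ r : R,
        ∑ y, (if y ∈ Set.range (A r) then 1 else 0 : ℝ≥0∞) ≤ (2 : ℝ≥0∞) ^ k := by
      intro r
      rw [Finset.sum_boole]
      have h1 : (Finset.univ.filter (· ∈ Set.range (A r))).card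
          = Nat.card (Set.range (A r)) := by
        rw [Nat.card_eq_fintype_card, Fintype.card_subtype]
      calc ((Finset.univ.filter (· ∈ Set.range (A r))).card : ℝ≥0∞)
          = (Nat.card (Set.range (A r)) : ℝ≥0∞) := by rw [h1]
        _ ≤ ((2 ^ k : ℕ) : ℝ≥0∞) := by exact_mod_cast Nat.cast_le.mpr (hA r)
        _ = (2 : ℝ≥0∞) ^ k := by push_cast; ring
    calc ∑' r, ∑ y, (if y ∈ Set.range (A r) then 1 else 0 : ℝ≥0∞) * ρ r
        = ∑' r, (∑ y, (if y ∈ Set.range (A r) then 1 else 0 : ℝ≥0∞)) * ρ r := by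
          refine tsum_congr fun r => ?_; rw [Finset.sum_mul]
      _ ≤ ∑' r, (2 : ℝ≥0∞) ^ k * ρ r :=
          ENNReal.tsum_le_tsum fun r => mul_le_mul_left (hcard r) _
      _ = (2 : ℝ≥0∞) ^ k := by rw [ENNReal.tsum_mul_left, PMF.tsum_coe, mul_one]
  -- main estimate
  set c : ℝ≥0∞ := (2 : ℝ≥0∞) ^ k / b with hc
  have main : pr (joint μ f) O ≤ c * pr (indepProd μ f) O + b := by
    rw [hp, hq]
    rw [← Finset.sum_filter_add_sum_filter_not Finset.univ
      (fun y => b * α y ≤ (2 : ℝ≥0∞) ^ k * m y) P]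
    gcongr ?_ + ?_
    · calc ∑ y ∈ Finset.univ.filter (fun y => b * α y ≤ (2 : ℝ≥0∞) ^ k * m y), P y
          ≤ ∑ y ∈ Finset.univ.filter (fun y => b * α y ≤ (2 : ℝ≥0∞) ^ k * m y),
            c * (π y * m y) := by
            refine Finset.sum_le_sum fun y hy => ?_
            rw [Finset.mem_filter] at hy
            have hαy : α y ≤ (2 : ℝ≥0∞) ^ k * m y / b := by
              rw [ENNReal.le_div_iff_mul_le (Or.inl hb0) (Or.inl hbtop), mul_comm]
              exact hy.2
            calc P y ≤ α y * π y := hPα y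
              _ ≤ ((2 : ℝ≥0∞) ^ k * m y / b) * π y := mul_le_mul_left hαy _
              _ = c * (π y * m y) := by
                  rw [hc, div_eq_mul_inv, div_eq_mul_inv]; ring
        _ ≤ c * ∑ y, π y * m y := by
            rw [← Finset.mul_sum]
            exact mul_le_mul_right (Finset.sum_le_sum_of_subset (Finset.filter_subset _ _)) _
    · calc ∑ y ∈ Finset.univ.filter (fun y => ¬ (b * α y ≤ (2 : ℝ≥0∞) ^ k * m y)), P y
          ≤ ∑ y ∈ Finset.univ.filter (fun y => ¬ (b * α y ≤ (2 : ℝ≥0∞) ^ k * m y)),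
            b / (2 : ℝ≥0∞) ^ k * α y := by
            refine Finset.sum_le_sum fun y hy => ?_
            rw [Finset.mem_filter, not_le] at hy
            have hmy : m y ≤ b * α y / (2 : ℝ≥0∞) ^ k := by
              rw [ENNReal.le_div_iff_mul_le (Or.inl h2) (Or.inl h2top), mul_comm]
              exact le_of_lt hy.2
            calc P y ≤ m y := hPm y
              _ ≤ b * α y / (2 : ℝ≥0∞) ^ k := hmy
              _ = b / (2 : ℝ≥0∞) ^ k * α y := by
                  rw [div_eq_mul_inv, div_eq_mul_inv]; ring
        _ ≤ b / (2 : ℝ≥0∞) ^ k * ∑ y, α y := by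
            rw [← Finset.mul_sum]
            exact mul_le_mul_right (Finset.sum_le_sum_of_subset (Finset.filter_subset _ _)) _
        _ ≤ b / (2 : ℝ≥0∞) ^ k * (2 : ℝ≥0∞) ^ k := mul_le_mul_right hαsum _
        _ = b := ENNReal.div_mul_cancel h2 h2top
  -- identify the constant
  have hconst : (2 : ℝ≥0∞) ^ ((k : ℝ) + Real.logb 2 (1 / β)) = c := by
    rw [ENNReal.rpow_add _ _ (by norm_num) (by norm_num)]
    have h1 : (2 : ℝ≥0∞) ^ (k : ℝ) = (2 : ℝ≥0∞) ^ k := by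
      rw [← ENNReal.rpow_natCast]
    have h2' : (2 : ℝ≥0∞) ^ (Real.logb 2 (1 / β)) = ENNReal.ofReal (1 / β) := by
      rw [show (2 : ℝ≥0∞) = ENNReal.ofReal 2 by norm_num,
        ENNReal.ofReal_rpow_of_pos (by norm_num : (0:ℝ) < 2),
        Real.rpow_logb (by norm_num) (by norm_num) (by positivity)]
    rw [h1, h2', hc]
    rw [one_div, ENNReal.ofReal_inv_of_pos hβ, div_eq_mul_inv, hb]
  rw [hconst]
  exact tsub_le_iff_right.mpr main
end
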